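/- arXiv:1203.1584 — 2 statements merged into one kernel-verified Lean document; each statement's English description precedes it below -/
import Mathlib

section
/- Let G be a connected graph of order n containing a cycle, with girth g(G). If β(G) = n - g(G) + 2, then G is 2-connected (G has no cut vertex and is not complete on too few vertices in the trivial sense). -/
/-!
Take a shortest cycle `C`, of length `g`. It is isometric, so two adjacent vertices of `C` already
resolve all vertices of `C`. Suppose `v` is a cut vertex and let `q` be a neighbour of `v` in a
component of `G - v` that does not meet `C - v`. Let `y` be whichever of `v`, `q` lies off `C`.
All vertices outside `C ∪ {y}`, together with two adjacent vertices of `C`, then form a resolving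
set of size `n - g + 1`: every path from `q` to `C - v` passes through `v`, which makes `y` look
different from every cycle vertex (seen from `q` when `y = v`, from the cycle vertex antipodal to
`v` when `y = q`). Hence `β(G) ≤ n - g + 1`.
-/

open SimpleGraph

/-- `W` is a resolving set for `G`: distinct vertices have distinct distance vectors to `W`. -/
def Resolves {V : Type*} (G : SimpleGraph V) (W : Set V) : Prop :=
  ∀ u v : V, u ≠ v → ∃ w ∈ W, G.dist u w ≠ G.dist v w

/-- The metric dimension of `G`: minimum cardinality of a resolving set. -/
noncomputable def metricDim {V : Type*} [Fintype V] (G : SimpleGraph V) : ℕ :=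
  sInf {k | ∃ W : Finset V, W.card = k ∧ Resolves G ↑W}

def cycleDist (L i j : ℕ) : ℕ := min (i.dist j) (L - i.dist j)

lemma cycleDist_comm (L i j : ℕ) : cycleDist L i j = cycleDist L j i := by
  rw [cycleDist, cycleDist, Nat.dist_comm]

lemma cycleDist_le_half (L i j : ℕ) : cycleDist L i j ≤ L / 2 := by
  simp only [cycleDist]
  omega

lemma eq_of_cycleDist_eq {L h i j : ℕ} (hi : i < L) (hj : j < L) (hh : h + 1 < L)
    (h₀ : cycleDist L i h = cycleDist L j h) (h₁ : cycleDist L i (h + 1) = cycleDist L j (h + 1)) :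
    i = j := by
  simp only [cycleDist, Nat.dist] at h₀ h₁
  omega

namespace SimpleGraph

variable {V : Type*} {G : SimpleGraph V}

lemma Walk.IsPath.girth_le_length_add_length {u v : V} {p q : G.Walk u v} (hp : p.IsPath)
    (hq : q.IsPath) (hpq : p ≠ q) : G.girth ≤ p.length + q.length := by
  obtain ⟨_, -, -, c, hc, hlen⟩ := hp.exists_isCycle_length_le_add_of_ne hq hpq
  exact (girth_le_length hc).trans hlen

lemma Walk.dist_getVert_le {u v : V} (p : G.Walk u v) {i j : ℕ} (hij : i ≤ j) :
    G.dist (p.getVert i) (p.getVert j) ≤ j - i := by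
  have hi : (p.take j).getVert i = p.getVert i := by rw [take_getVert, min_eq_right hij]
  calc G.dist (p.getVert i) (p.getVert j) ≤ ((p.take j).drop i).length := hi ▸ dist_le _
    _ ≤ j - i := by simp only [drop_length, take_length]; omega

lemma Walk.dist_getVert_le_length_sub {x : V} (c : G.Walk x x) {i j : ℕ} (hij : i ≤ j)
    (hj : j ≤ c.length) : G.dist (c.getVert i) (c.getVert j) ≤ c.length - (j - i) := by
  rw [dist_comm]
  calc G.dist (c.getVert j) (c.getVert i) ≤ ((c.drop j).append (c.take i)).length := dist_le _
    _ = c.length - (j - i) := by simp only [length_append, drop_length, take_length]; omega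

namespace Walk.IsCycle

variable {x : V} {c : G.Walk x x}

lemma exists_getVert_eq (hc : c.IsCycle) {z : V} (hz : z ∈ c.support) :
    ∃ i < c.length, c.getVert i = z := by
  obtain ⟨i, rfl, hi⟩ := mem_support_iff_exists_getVert.1 hz
  rcases hi.lt_or_eq with hi | rfl
  · exact ⟨i, hi, rfl⟩
  · exact ⟨0, by have := hc.three_le_length; omega, by simp⟩

lemma card_support_toFinset [DecidableEq V] (hc : c.IsCycle) :
    c.support.toFinset.card = c.length := by
  rw [← c.cons_tail_support, List.toFinset_cons,
    Finset.insert_eq_of_mem (List.mem_toFinset.2 (c.end_mem_tail_support hc.not_nil)),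
    List.toFinset_card_of_nodup hc.support_nodup, List.length_tail, length_support]
  rfl

lemma length_le_card [Fintype V] (hc : c.IsCycle) : c.length ≤ Fintype.card V := by
  classical
  exact hc.card_support_toFinset ▸ Finset.card_le_univ _

/-- Otherwise a shortest path and an arc of the cycle would close up a cycle shorter than `c`. -/
lemma dist_getVert_of_le (hc : c.IsCycle) (hg : G.girth = c.length) {i j : ℕ} (hij : i ≤ j)
    (hj : j < c.length) : G.dist (c.getVert i) (c.getVert j) = cycleDist c.length i j := by
  let A : G.Walk (c.getVert i) (c.getVert j) :=
    ((c.take j).drop i).copy (by rw [take_getVert, min_eq_right hij]) rfl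
  have hA : A.IsPath := by simpa [A] using (hc.isPath_take hj).drop i
  have hAlen : A.length = j - i := by simp only [A, length_copy, drop_length, take_length]; omega
  obtain ⟨P, hP, hPlen⟩ := A.reachable.exists_path_of_dist
  have hlow : j - i ≤ P.length ∨ c.length ≤ P.length + (j - i) := by
    by_cases hPA : P = A
    · exact .inl (hPA ▸ hAlen.ge)
    · exact .inr (hg ▸ hAlen ▸ hP.girth_le_length_add_length hA hPA)
  have := c.dist_getVert_le hij
  have := c.dist_getVert_le_length_sub hij hj.le
  simp only [cycleDist, Nat.dist]
  omega

lemma dist_getVert (hc : c.IsCycle) (hg : G.girth = c.length) {i j : ℕ} (hi : i < c.length)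
    (hj : j < c.length) : G.dist (c.getVert i) (c.getVert j) = cycleDist c.length i j := by
  rcases le_total i j with hij | hji
  · exact hc.dist_getVert_of_le hg hij hj
  · rw [dist_comm, cycleDist_comm]
    exact hc.dist_getVert_of_le hg hji hi

end Walk.IsCycle

def Separates (G : SimpleGraph V) (v s t : V) : Prop :=
  ∀ p : G.Walk s t, v ∈ p.support

lemma Separates.of_walk {v s s' t : V} (h : G.Separates v s t) (p : G.Walk s s')
    (hp : v ∉ p.support) : G.Separates v s' t := fun r => by
  have := h (p.append r)
  rw [Walk.mem_support_append_iff] at this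
  tauto

lemma Separates.dist_eq_add {v s t : V} (h : G.Separates v s t) (hst : G.Reachable s t) :
    G.dist s t = G.dist s v + G.dist v t := by
  classical
  obtain ⟨p, hp⟩ := hst.exists_walk_length_eq_dist
  have hv := h p
  have hsplit := congrArg Walk.length (p.take_spec hv)
  rw [Walk.length_append] at hsplit
  have := dist_le (p.takeUntil v hv)
  have := dist_le (p.dropUntil v hv)
  have := (p.takeUntil v hv).reachable.dist_triangle_left t
  omega

/-- The neighbour is the first step of a path from `v` into a component of `G - v` other than
that of `z`. -/
lemma exists_adj_separates (hG : G.Connected) {v z : V} (hz : z ≠ v)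
    (hv : ¬ (G.induce ({v}ᶜ : Set V)).Connected) : ∃ q, G.Adj v q ∧ G.Separates v z q := by
  by_contra! h
  refine hv (induce_connected_of_patches z hz fun {y} hy => ?_)
  obtain ⟨p, hp, -⟩ := (hG v y).exists_path_of_dist
  cases p with
  | nil => exact absurd rfl hy
  | cons hvq p =>
    obtain ⟨r, hr⟩ : ∃ r : G.Walk z _, v ∉ r.support := by
      simpa [Separates] using h _ hvq
    have hs : v ∉ (r.append p).support := by
      rw [Walk.mem_support_append_iff]
      exact fun h' => h'.elim hr ((Walk.cons_isPath_iff _ _).1 hp).2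
    refine ⟨{u | u ∈ (r.append p).support}, fun u hu hne => hs (hne ▸ hu),
      (r.append p).start_mem_support, (r.append p).end_mem_support, ?_⟩
    exact (r.append p).connected_induce_support.preconnected _ _

end SimpleGraph

lemma resolves_of_forall_notMem {V : Type*} {G : SimpleGraph V} (hG : G.Connected) {W : Set V}
    (h : ∀ u u', u ∉ W → u' ∉ W → u ≠ u' → ∃ w ∈ W, G.dist u w ≠ G.dist u' w) :
    Resolves G W := by
  intro u u' hne
  by_cases hu : u ∈ W
  · exact ⟨u, hu, by rw [dist_self]; exact (hG.pos_dist_of_ne hne.symm).ne⟩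
  by_cases hu' : u' ∈ W
  · exact ⟨u', hu', by rw [dist_self]; exact (hG.pos_dist_of_ne hne).ne'⟩
  exact h u u' hu hu' hne

lemma Resolves.metricDim_le_card {V : Type*} [Fintype V] {G : SimpleGraph V} {W : Finset V}
    (hW : Resolves G W) : metricDim G ≤ W.card :=
  Nat.sInf_le ⟨W, rfl, hW⟩

namespace SimpleGraph.Walk.IsCycle

variable {V : Type*} [Fintype V] {G : SimpleGraph V} {x : V} {c : G.Walk x x}

/-- The resolving set is `V ∖ (C ∪ {y})` together with `c_h` and `c_(h+1)`, which tell all cycle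
vertices apart. -/
lemma metricDim_add_length_le (hG : G.Connected) (hc : c.IsCycle) (hg : G.girth = c.length)
    {h : ℕ} (hh : h + 1 < c.length) {y w : V} (hy : y ∉ c.support)
    (hw : w = c.getVert h ∨ w ∉ c.support ∧ w ≠ y)
    (hyw : ∀ i < c.length, G.dist (c.getVert i) w ≠ G.dist y w) :
    metricDim G + c.length ≤ Fintype.card V + 1 := by
  classical
  set C := c.support.toFinset
  set W : Finset V := insert (c.getVert h) (insert (c.getVert (h + 1)) (Finset.univ \ insert y C))
  have hcard : W.card + c.length ≤ Fintype.card V + 1 := by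
    have hyC : y ∉ C := by simpa [C] using hy
    have hW : W.card ≤ (Finset.univ \ insert y C).card + 2 :=
      (Finset.card_insert_le _ _).trans (Nat.succ_le_succ (Finset.card_insert_le _ _))
    have hyCn := Finset.card_le_univ (insert y C)
    rw [Finset.card_insert_of_notMem hyC, hc.card_support_toFinset] at hyCn
    rw [Finset.card_univ_sdiff, Finset.card_insert_of_notMem hyC, hc.card_support_toFinset] at hW
    omega
  have hmem : ∀ u ∉ W, u = y ∨ ∃ i < c.length, c.getVert i = u := by
    intro u hu
    have : u = y ∨ u ∈ c.support := by simp [W, C] at hu; tauto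
    exact this.imp_right hc.exists_getVert_eq
  have hwW : w ∈ W := by
    rcases hw with rfl | ⟨hwc, hwy⟩
    · exact Finset.mem_insert_self _ _
    · simp [W, C, hwc, hwy]
  have hres : Resolves G W := by
    refine resolves_of_forall_notMem hG fun u u' hu hu' hne => ?_
    rcases hmem u hu, hmem u' hu' with ⟨rfl | ⟨i, hi, rfl⟩, rfl | ⟨j, hj, rfl⟩⟩
    · exact absurd rfl hne
    · exact ⟨w, hwW, (hyw j hj).symm⟩
    · exact ⟨w, hwW, hyw i hi⟩
    · by_contra! hsame
      have e₀ := hsame _ (Finset.mem_insert_self _ _)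
      have e₁ := hsame _ (Finset.mem_insert_of_mem (Finset.mem_insert_self _ _))
      rw [hc.dist_getVert hg hi (by omega : h < c.length),
        hc.dist_getVert hg hj (by omega : h < c.length)] at e₀
      rw [hc.dist_getVert hg hi hh, hc.dist_getVert hg hj hh] at e₁
      exact hne (congrArg c.getVert (eq_of_cycleDist_eq hi hj hh e₀ e₁))
  have := hres.metricDim_le_card
  omega

lemma metricDim_add_length_le_of_not_connected_induce_start (hG : G.Connected) (hc : c.IsCycle)
    (hg : G.girth = c.length) (hx : ¬ (G.induce ({x}ᶜ : Set V)).Connected) :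
    metricDim G + c.length ≤ Fintype.card V + 1 := by
  classical
  have hL := hc.three_le_length
  set h := c.length / 2
  have hgetVert : ∀ i, 0 < i → i < c.length → c.getVert i ≠ x := fun i hi hiL hix => by
    have := (hc.getVert_endpoint_iff hiL.le).1 hix
    omega
  obtain ⟨q, hxq, hsep⟩ := exists_adj_separates hG (hgetVert 1 one_pos (by omega)) hx
  have htail : ∀ z ∈ c.support, z ≠ x → ∃ p : G.Walk (c.getVert 1) z, x ∉ p.support := by
    intro z hz hzx
    rw [← c.cons_tail_support, List.mem_cons, ← support_tail_of_not_nil _ hc.not_nil] at hz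
    exact ⟨c.tail.takeUntil z (hz.resolve_left hzx),
      endpoint_notMem_support_takeUntil hc.isPath_tail _ hzx.symm⟩
  have hq : q ∉ c.support := fun hq => by
    by_cases hqx : q = x
    · exact hxq.ne hqx.symm
    · obtain ⟨p, hp⟩ := htail q hq hqx
      exact hp (hsep p)
  have hh : h + 1 < c.length := by omega
  refine hc.metricDim_add_length_le hG hg hh hq (Or.inl rfl) fun i hi => ?_
  have hsep' : G.Separates x (c.getVert h) q := by
    obtain ⟨p, hp⟩ := htail _ (c.getVert_mem_support h) (hgetVert h (by omega) (by omega))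
    exact hsep.of_walk p hp
  have hqh : G.dist q (c.getVert h) = h + 1 := by
    have hxh : G.dist x (c.getVert h) = h := by
      have := hc.dist_getVert hg (i := 0) (j := h) (by omega) (by omega)
      rw [c.getVert_zero] at this
      rw [this]
      simp only [cycleDist, Nat.dist]
      omega
    rw [dist_comm, hsep'.dist_eq_add (hG _ _), dist_comm, hxh, dist_eq_one_iff_adj.2 hxq]
  rw [hqh, hc.dist_getVert hg hi (by omega)]
  have := cycleDist_le_half c.length i h
  omega

lemma metricDim_add_length_le_of_notMem_support (hG : G.Connected) (hc : c.IsCycle)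
    (hg : G.girth = c.length) {v : V} (hv : v ∉ c.support)
    (hdisc : ¬ (G.induce ({v}ᶜ : Set V)).Connected) :
    metricDim G + c.length ≤ Fintype.card V + 1 := by
  classical
  have hL := hc.three_le_length
  obtain ⟨q, hvq, hsep⟩ :=
    exists_adj_separates hG (ne_of_mem_of_not_mem c.start_mem_support hv) hdisc
  have hq : q ∉ c.support := fun hq =>
    hv (c.support_takeUntil_subset_support hq (hsep (c.takeUntil q hq)))
  refine hc.metricDim_add_length_le hG hg (h := 0) (by omega) hv (Or.inr ⟨hq, hvq.ne.symm⟩)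
    fun i hi => ?_
  have hci : c.getVert i ∈ c.support := c.getVert_mem_support i
  have hsep' : G.Separates v (c.getVert i) q := hsep.of_walk (c.takeUntil _ hci)
    fun hvi => hv (c.support_takeUntil_subset_support hci hvi)
  rw [hsep'.dist_eq_add (hG _ _), dist_eq_one_iff_adj.2 hvq]
  have := hG.pos_dist_of_ne (ne_of_mem_of_not_mem hci hv)
  omega

end SimpleGraph.Walk.IsCycle

namespace SimpleGraph

variable {V : Type*} [Fintype V] {G : SimpleGraph V}

lemma metricDim_add_girth_le_of_not_connected_induce (hG : G.Connected) (hacyc : ¬ G.IsAcyclic)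
    {v : V} (hv : ¬ (G.induce ({v}ᶜ : Set V)).Connected) :
    metricDim G + G.girth ≤ Fintype.card V + 1 := by
  classical
  obtain ⟨x, c, hc, hg⟩ := exists_girth_eq_length.2 hacyc
  by_cases hvc : v ∈ c.support
  · have hg' : G.girth = (c.rotate v hvc).length := by rw [Walk.length_rotate, hg]
    exact hg' ▸ (hc.rotate hvc).metricDim_add_length_le_of_not_connected_induce_start hG hg' hv
  · exact hg ▸ hc.metricDim_add_length_le_of_notMem_support hG hg hvc hv

lemma girth_le_card (hacyc : ¬ G.IsAcyclic) : G.girth ≤ Fintype.card V := by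
  obtain ⟨x, c, hc, hg⟩ := exists_girth_eq_length.2 hacyc
  exact hg ▸ hc.length_le_card

end SimpleGraph

theorem stmt6 {V : Type*} [Fintype V] (G : SimpleGraph V) (hG : G.Connected)
    (hc : ¬ G.IsAcyclic) (h : metricDim G = Fintype.card V - G.girth + 2) :
    3 ≤ Fintype.card V ∧ ∀ v : V, (G.induce ({v}ᶜ : Set V)).Connected := by
  have hgn := girth_le_card hc
  refine ⟨(three_le_girth hc).trans hgn, fun v => ?_⟩
  by_contra hv
  have := metricDim_add_girth_le_of_not_connected_induce hG hc hv
  omega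
end

section
/- Let G be a connected graph of order n ≥ 4 with girth 4 and β(G) = n - 2. Then G is a complete bipartite graph K_{r,s} with r,s ≥ 2. -/
open SimpleGraph

/-!
If `β(G) = n - 2`, the complement of any three distinct vertices is not resolving, so two of the
three are at equal distance from every vertex outside the triple. Applied to vertices at distances
1, 2, 3 from a fixed vertex, this bounds the diameter by 2. Applied to an edge `ab`, a vertex `c`
adjacent to neither end, and a common neighbour of `a` and `c`, it yields a triangle or the edge
`bc`; hence in a triangle-free such graph every vertex is adjacent to an end of every edge. In a
triangle-free graph with that property the neighbourhood of any vertex and its complement form a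
complete bipartition, and a 4-cycle puts two vertices on each side.
-/

namespace SimpleGraph

variable {V : Type*} {G : SimpleGraph V}

lemma cliqueFree_three_of_three_lt_girth (h : 3 < G.girth) : G.CliqueFree 3 := by
  intro s hs
  obtain ⟨u, w, hw, hlen⟩ := is3Clique_iff_exists_cycle_length_three.mp ⟨s, hs⟩
  have := girth_le_length hw
  omega

lemma exists_cycle_four_of_girth_eq_four (hg : G.girth = 4) :
    ∃ a b c d : V, G.Adj a b ∧ G.Adj b c ∧ G.Adj c d ∧ G.Adj d a ∧ a ≠ c ∧ b ≠ d := by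
  have hcyc : ¬ G.IsAcyclic := fun h ↦ by simp [girth_eq_zero.mpr h] at hg
  obtain ⟨a, w, hw, hlen⟩ := exists_girth_eq_length.mpr hcyc
  rw [hg] at hlen
  have hadj (i : ℕ) (hi : i < 4) := w.adj_getVert_succ (i := i) (by omega)
  have hne {i j : ℕ} (hij : i < j) (hj : j ≤ 3) : w.getVert i ≠ w.getVert j := fun h ↦
    hij.ne (hw.getVert_injOn' (by simp only [Set.mem_ofPred_eq]; omega)
      (by simp only [Set.mem_ofPred_eq]; omega) h)
  refine ⟨w.getVert 0, w.getVert 1, w.getVert 2, w.getVert 3, hadj 0 (by norm_num),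
    hadj 1 (by norm_num), hadj 2 (by norm_num), ?_, hne (by norm_num) (by norm_num),
    hne (by norm_num) (by norm_num)⟩
  simpa [hlen, w.getVert_length] using hadj 3 (by norm_num)

lemma dist_getVert_of_length_eq_dist {u v : V} {p : G.Walk u v} (hp : p.length = G.dist u v)
    {i : ℕ} (hi : i ≤ p.length) : G.dist u (p.getVert i) = i := by
  have hu := dist_le (p.take i)
  have hv := dist_le (p.drop i)
  have := (p.take i).reachable.dist_triangle_left v
  simp only [Walk.take_length, Walk.drop_length] at hu hv
  omega

lemma exists_dist_eq_of_le_dist {u v : V} {k : ℕ} (hk : k ≤ G.dist u v) :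
    ∃ x, G.dist u x = k := by
  rcases Nat.eq_zero_or_pos k with rfl | hk₀
  · exact ⟨u, dist_self⟩
  obtain ⟨p, hp⟩ := exists_walk_of_dist_ne_zero (by omega : G.dist u v ≠ 0)
  exact ⟨p.getVert k, dist_getVert_of_length_eq_dist hp (by omega)⟩

lemma adj_iff_adj_of_dist_eq {x y z : V} (h : G.dist x z = G.dist y z) :
    G.Adj x z ↔ G.Adj y z := by
  rw [← dist_eq_one_iff_adj, h, dist_eq_one_iff_adj]

lemma CliqueFree.not_adj_of_adj_of_adj (h : G.CliqueFree 3) {x y z : V} (hxy : G.Adj x y)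
    (hxz : G.Adj x z) : ¬ G.Adj y z :=
  fun hyz ↦ isIndepSet_neighborSet_of_triangleFree G h x hxy hxz hyz.ne hyz

lemma adj_iff_of_cliqueFree_three (htri : G.CliqueFree 3)
    (hdom : ∀ ⦃a b⦄, G.Adj a b → ∀ c, G.Adj a c ∨ G.Adj b c) (b x y : V) :
    G.Adj x y ↔ (G.Adj b x ↔ ¬ G.Adj b y) := by
  constructor
  · intro hxy
    rcases hdom hxy b with hxb | hyb
    · exact iff_of_true hxb.symm fun hby ↦ htri.not_adj_of_adj_of_adj hxb.symm hby hxy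
    · exact iff_of_false (fun hbx ↦ htri.not_adj_of_adj_of_adj hbx hyb.symm hxy)
        (not_not.mpr hyb.symm)
  · intro h
    by_cases hbx : G.Adj b x
    · exact (hdom hbx y).resolve_left (h.mp hbx)
    · exact ((hdom (not_not.mp (h.not.mp hbx)) x).resolve_left hbx).symm

def completeBipartiteGraphIsoOfAdjIff (P : V → Prop) [DecidablePred P]
    (h : ∀ x y, G.Adj x y ↔ (P x ↔ ¬ P y)) :
    completeBipartiteGraph {x // P x} {x // ¬ P x} ≃g G where
  toEquiv := Equiv.sumCompl P
  map_rel_iff' {x y} := by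
    rcases x with ⟨x, hx⟩ | ⟨x, hx⟩ <;> rcases y with ⟨y, hy⟩ | ⟨y, hy⟩ <;> simp [h, hx, hy]

section MetricDimension

variable [Fintype V]

lemma resolves_compl (hG : G.Connected) [DecidableEq V] {T : Finset V}
    (hT : ∀ u ∈ T, ∀ v ∈ T, u ≠ v → ∃ z ∉ T, G.dist u z ≠ G.dist v z) : Resolves G ↑Tᶜ := by
  intro u v huv
  by_cases hu : u ∈ T
  · by_cases hv : v ∈ T
    · obtain ⟨z, hz, h⟩ := hT u hu v hv huv
      exact ⟨z, by simpa using hz, h⟩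
    · exact ⟨v, by simpa using hv, by simpa using (hG.pos_dist_of_ne huv).ne'⟩
  · exact ⟨u, by simpa using hu, by simpa using (hG.pos_dist_of_ne huv.symm).ne⟩

lemma metricDim_le_card_sub_card (hG : G.Connected) [DecidableEq V] {T : Finset V}
    (hT : ∀ u ∈ T, ∀ v ∈ T, u ≠ v → ∃ z ∉ T, G.dist u z ≠ G.dist v z) :
    metricDim G ≤ Fintype.card V - T.card :=
  Nat.sInf_le ⟨Tᶜ, Finset.card_compl T, resolves_compl hG hT⟩

lemma exists_twins_of_metricDim_eq (hG : G.Connected) [DecidableEq V]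
    (hb : metricDim G = Fintype.card V - 2) {u v w : V} (huv : u ≠ v) (huw : u ≠ w)
    (hvw : v ≠ w) :
    (∀ z ∉ ({u, v, w} : Finset V), G.dist u z = G.dist v z) ∨
    (∀ z ∉ ({u, v, w} : Finset V), G.dist u z = G.dist w z) ∨
    (∀ z ∉ ({u, v, w} : Finset V), G.dist v z = G.dist w z) := by
  by_contra! h
  obtain ⟨⟨a, ha, huva⟩, ⟨b, hb', huwb⟩, ⟨c, hc, hvwc⟩⟩ := h
  have hT : ∀ x ∈ ({u, v, w} : Finset V), ∀ y ∈ ({u, v, w} : Finset V), x ≠ y →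
      ∃ z ∉ ({u, v, w} : Finset V), G.dist x z ≠ G.dist y z := by
    intro x hx y hy hxy
    simp only [Finset.mem_insert, Finset.mem_singleton] at hx hy
    rcases hx with rfl | rfl | rfl <;> rcases hy with rfl | rfl | rfl
    all_goals first
      | exact absurd rfl hxy
      | exact ⟨a, ha, huva⟩ | exact ⟨b, hb', huwb⟩ | exact ⟨c, hc, hvwc⟩
      | exact ⟨a, ha, huva.symm⟩ | exact ⟨b, hb', huwb.symm⟩ | exact ⟨c, hc, hvwc.symm⟩
  have hcard : ({u, v, w} : Finset V).card = 3 :=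
    Finset.card_eq_three.mpr ⟨u, v, w, huv, huw, hvw, rfl⟩
  have := metricDim_le_card_sub_card hG hT
  have := Finset.card_le_univ ({u, v, w} : Finset V)
  omega

lemma dist_le_two_of_metricDim_eq (hG : G.Connected) (hb : metricDim G = Fintype.card V - 2)
    (u v : V) : G.dist u v ≤ 2 := by
  classical
  by_contra! h
  obtain ⟨x₁, h₁⟩ := exists_dist_eq_of_le_dist (k := 1) (by omega : 1 ≤ G.dist u v)
  obtain ⟨x₂, h₂⟩ := exists_dist_eq_of_le_dist (k := 2) (by omega : 2 ≤ G.dist u v)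
  obtain ⟨x₃, h₃⟩ := exists_dist_eq_of_le_dist (k := 3) (by omega : 3 ≤ G.dist u v)
  have hu : u ∉ ({x₁, x₂, x₃} : Finset V) := by
    simp only [Finset.mem_insert, Finset.mem_singleton, not_or]
    refine ⟨?_, ?_, ?_⟩ <;> rintro rfl <;> simp_all
  rw [dist_comm] at h₁ h₂ h₃
  rcases exists_twins_of_metricDim_eq hG hb (u := x₁) (v := x₂) (w := x₃)
    (by rintro rfl; omega) (by rintro rfl; omega) (by rintro rfl; omega) with h | h | h <;>
  · have := h u hu
    omega

lemma exists_adj_adj_of_metricDim_eq (hG : G.Connected) (hb : metricDim G = Fintype.card V - 2)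
    {u v : V} (huv : u ≠ v) (hnadj : ¬ G.Adj u v) : ∃ m, G.Adj u m ∧ G.Adj v m := by
  have h₂ : G.edist u v = 2 := by
    rw [← (hG u v).coe_dist_eq_edist, le_antisymm (dist_le_two_of_metricDim_eq hG hb u v)
      (hG.one_lt_dist_of_ne_of_not_adj huv hnadj)]
    rfl
  obtain ⟨m, hm⟩ := (edist_eq_two_iff.mp h₂).2.2
  exact ⟨m, (G.mem_commonNeighbors).mp hm⟩

lemma adj_or_adj_of_metricDim_eq (hG : G.Connected) (hb : metricDim G = Fintype.card V - 2)
    (htri : G.CliqueFree 3) {a b : V} (hab : G.Adj a b) (c : V) : G.Adj a c ∨ G.Adj b c := by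
  classical
  by_contra! ⟨hac, hbc⟩
  have hca : a ≠ c := by rintro rfl; exact hbc hab.symm
  obtain ⟨m, ham, hcm⟩ := exists_adj_adj_of_metricDim_eq hG hb hca hac
  have hb_out : b ∉ ({a, c, m} : Finset V) := by
    simp only [Finset.mem_insert, Finset.mem_singleton, not_or]
    exact ⟨hab.ne', by rintro rfl; exact hac hab, by rintro rfl; exact hbc hcm.symm⟩
  rcases exists_twins_of_metricDim_eq hG hb hca ham.ne hcm.ne with h | h | h
  · exact hbc ((adj_iff_adj_of_dist_eq (h b hb_out)).mp hab).symm
  · exact htri.not_adj_of_adj_of_adj hab ham ((adj_iff_adj_of_dist_eq (h b hb_out)).mp hab).symm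
  · obtain ⟨m', hbm', hcm'⟩ :=
      exists_adj_adj_of_metricDim_eq hG hb (by rintro rfl; exact hac hab) hbc
    have hm'_out : m' ∉ ({a, c, m} : Finset V) := by
      simp only [Finset.mem_insert, Finset.mem_singleton, not_or]
      refine ⟨by rintro rfl; exact hac hcm'.symm, hcm'.ne', ?_⟩
      rintro rfl
      exact hbc ((adj_iff_adj_of_dist_eq (h b hb_out)).mpr hbm'.symm).symm
    exact htri.not_adj_of_adj_of_adj hcm hcm' ((adj_iff_adj_of_dist_eq (h m' hm'_out)).mp hcm')

end MetricDimension

end SimpleGraph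

theorem stmt18_general {V : Type*} [Fintype V] (G : SimpleGraph V) (hG : G.Connected)
    (hg : G.girth = 4)
    (hb : metricDim G = Fintype.card V - 2) :
    ∃ r s : ℕ, 2 ≤ r ∧ 2 ≤ s ∧
      Nonempty (G ≃g completeBipartiteGraph (Fin r) (Fin s)) := by
  classical
  have htri : G.CliqueFree 3 := cliqueFree_three_of_three_lt_girth (by omega)
  obtain ⟨a, b, c, d, hab, hbc, -, hda, hac, hbd⟩ := exists_cycle_four_of_girth_eq_four hg
  have hadj := adj_iff_of_cliqueFree_three htri
    (fun _ _ ↦ adj_or_adj_of_metricDim_eq hG hb htri) b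
  refine ⟨Fintype.card {x // G.Adj b x}, Fintype.card {x // ¬ G.Adj b x}, ?_, ?_,
    ⟨(completeBipartiteGraphIsoOfAdjIff (G.Adj b) hadj).symm.trans
      (completeBipartiteGraphCongr (Fintype.equivFin _) (Fintype.equivFin _))⟩⟩
  · exact Fintype.one_lt_card_iff.mpr
      ⟨⟨a, hab.symm⟩, ⟨c, hbc⟩, fun h ↦ hac (congrArg Subtype.val h)⟩
  · exact Fintype.one_lt_card_iff.mpr ⟨⟨b, G.loopless.irrefl b⟩,
      ⟨d, htri.not_adj_of_adj_of_adj hab hda.symm⟩, fun h ↦ hbd (congrArg Subtype.val h)⟩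

theorem stmt18 {V : Type*} [Fintype V] (G : SimpleGraph V) (hG : G.Connected)
    (hn : 4 ≤ Fintype.card V) (hg : G.girth = 4)
    (hb : metricDim G = Fintype.card V - 2) :
    ∃ r s : ℕ, 2 ≤ r ∧ 2 ≤ s ∧
      Nonempty (G ≃g completeBipartiteGraph (Fin r) (Fin s)) :=
  stmt18_general G hG hg hb
end
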